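/- The following statements are equivalent: (i) for every (c,s) ∈ X*×ℝ with inf(RLIP_c) > −∞, the assertions (α) and (β) are equivalent, where (α): every x ∈ X with ⟨x*,x⟩ ≤ r for all (x*,r) ∈ 𝒱 satisfies ⟨c,x⟩ ≥ s, and (β): there exist (x̄*, r̄) ∈ 𝒱 and λ̄ ≥ 0 with λ̄x̄* = −c and λ̄r̄ ≤ −s; (ii) cone 𝒱 + ℝ₊(0_{X*},1) is a convex and closed subset of X*×ℝ (weak*-topology on X* times the usual topology on ℝ). -/

import Mathlib

open Pointwise

variable {X : Type*} [AddCommGroup X] [Module ℝ X] [TopologicalSpace X]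
  [IsTopologicalAddGroup X] [ContinuousSMul ℝ X] [LocallyConvexSpace ℝ X] [T2Space X]
  {T : Type*}

/-- The cone generated by a set `A`: `cone A = {λa : λ ≥ 0, a ∈ A}`. -/
def coneSet {E : Type*} [SMul ℝ E] (A : Set E) : Set E :=
  {p | ∃ l : ℝ, 0 ≤ l ∧ ∃ a ∈ A, p = l • a}

/-- The optimal value of the robust primal problem (RLIP_c). -/
noncomputable def infRLIP (U : T → Set (WeakDual ℝ X × ℝ)) (c : WeakDual ℝ X) : EReal :=
  ⨅ x : {x : X | ∀ t, ∀ v ∈ U t, v.1 x ≤ v.2}, ((c x.1 : ℝ) : EReal)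

/-!
Let `K = cone 𝒱 + ℝ₊(0,1)` and let `M` be the set of pairs `(w, ρ)` with `w ≤ ρ` on the feasible
set `F`. Always `K ⊆ M`, and `M` is convex and weak*-closed. Reading `(α)` as `(-c, -s) ∈ M` and
`(β)` as `(-c, -s) ∈ K`, statement (i) says exactly `M = K` (for `p ∈ M` the value
`inf(RLIP_{-p.1})` is at least `-p.2`, hence finite).
Conversely, if `K` is a closed convex cone and `p ∈ M \ K`, Farkas separation gives a functional
`(w, ρ) ↦ w y + μ ρ` with `μ ≥ 0`, nonnegative on `K` and negative at `p`. Then `w (-y) ≤ μ ρ` for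
all `(w, ρ) ∈ 𝒱`, so `-μ⁻¹ y` is feasible if `μ > 0`, and `-y` is a recession direction of `F` if
`μ = 0`; either way `p ∈ M` makes the functional nonnegative at `p`.
-/

section Farkas

variable {E : Type*} [AddCommGroup E] [Module ℝ E] [TopologicalSpace E]

instance : LocallyConvexSpace ℝ (WeakDual ℝ E) := WeakBilin.locallyConvexSpace

theorem StrongDual.exists_eq_eval_add_mul (f : StrongDual ℝ (WeakDual ℝ E × ℝ)) :
    ∃ y : E, ∀ q : WeakDual ℝ E × ℝ, f q = q.1 y + q.2 * f (0, 1) := by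
  obtain ⟨y, hy⟩ := LinearMap.dualEmbedding_surjective (topDualPairing ℝ E)
    (f.comp (ContinuousLinearMap.inl ℝ (WeakDual ℝ E) ℝ))
  refine ⟨y, fun q => ?_⟩
  have h1 : f (q.1, 0) = q.1 y := (DFunLike.congr_fun hy q.1).symm
  calc f q = f ((q.1, 0) + q.2 • (0, 1)) := by congr 1; ext <;> simp
    _ = q.1 y + q.2 * f (0, 1) := by rw [map_add, map_smul, h1, smul_eq_mul]

theorem exists_strongDual_nonneg_of_notMem_of_smul_mem {F : Type*} [AddCommGroup F] [Module ℝ F]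
    [TopologicalSpace F] [IsTopologicalAddGroup F] [ContinuousSMul ℝ F] [LocallyConvexSpace ℝ F]
    {K : Set F} (hK0 : 0 ∈ K) (hKsmul : ∀ c : ℝ, 0 ≤ c → ∀ x ∈ K, c • x ∈ K)
    (hKconv : Convex ℝ K) (hKclosed : IsClosed K) {p : F} (hp : p ∉ K) :
    ∃ f : StrongDual ℝ F, (∀ x ∈ K, 0 ≤ f x) ∧ f p < 0 :=
  ProperCone.hyperplane_separation_point
    { carrier := K
      add_mem' := fun {x y} hx hy => by
        simpa [smul_add, smul_smul] using
          hKsmul 2 zero_le_two _ (hKconv hx hy (by norm_num) (by norm_num) (add_halves 1))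
      zero_mem' := hK0
      smul_mem' := fun c x hx => hKsmul c c.2 x hx
      isClosed' := hKclosed } hp

variable (V : Set (WeakDual ℝ E × ℝ))

def feasibleSet : Set E := {x | ∀ v ∈ V, v.1 x ≤ v.2}

def consequenceSet : Set (WeakDual ℝ E × ℝ) := {p | ∀ x ∈ feasibleSet V, p.1 x ≤ p.2}

def farkasCone : Set (WeakDual ℝ E × ℝ) :=
  coneSet V + {p : WeakDual ℝ E × ℝ | p.1 = 0 ∧ 0 ≤ p.2}

variable {V}

theorem mem_farkasCone_iff {p : WeakDual ℝ E × ℝ} :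
    p ∈ farkasCone V ↔ ∃ v ∈ V, ∃ l : ℝ, 0 ≤ l ∧ l • v.1 = p.1 ∧ l * v.2 ≤ p.2 := by
  constructor
  · rintro ⟨_, ⟨l, hl, v, hv, rfl⟩, b, ⟨hb1, hb2⟩, rfl⟩
    exact ⟨v, hv, l, hl, by simp [hb1], by simpa using hb2⟩
  · rintro ⟨v, hv, l, hl, h1, h2⟩
    refine ⟨l • v, ⟨l, hl, v, hv, rfl⟩, (0, p.2 - l * v.2), ⟨rfl, sub_nonneg.2 h2⟩, ?_⟩
    ext <;> simp [h1]

theorem self_subset_farkasCone : V ⊆ farkasCone V := fun v hv =>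
  mem_farkasCone_iff.2 ⟨v, hv, 1, zero_le_one, one_smul _ _, (one_mul _).le⟩

theorem smul_mem_farkasCone {c : ℝ} (hc : 0 ≤ c) {p : WeakDual ℝ E × ℝ}
    (hp : p ∈ farkasCone V) : c • p ∈ farkasCone V := by
  obtain ⟨v, hv, l, hl, h1, h2⟩ := mem_farkasCone_iff.1 hp
  refine mem_farkasCone_iff.2 ⟨v, hv, c * l, mul_nonneg hc hl, ?_, ?_⟩
  · simp [mul_smul, h1]
  · simpa [mul_assoc] using mul_le_mul_of_nonneg_left h2 hc

theorem zero_mem_farkasCone (hV : V.Nonempty) : (0 : WeakDual ℝ E × ℝ) ∈ farkasCone V := by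
  obtain ⟨v, hv⟩ := hV
  simpa using smul_mem_farkasCone le_rfl (self_subset_farkasCone hv)

theorem farkasCone_subset_consequenceSet : farkasCone V ⊆ consequenceSet V := by
  intro p hp x hx
  obtain ⟨v, hv, l, hl, h1, h2⟩ := mem_farkasCone_iff.1 hp
  rw [← h1]
  calc (l • v.1) x = l * v.1 x := rfl
    _ ≤ l * v.2 := mul_le_mul_of_nonneg_left (hx v hv) hl
    _ ≤ p.2 := h2

theorem convex_consequenceSet : Convex ℝ (consequenceSet V) := by
  intro p hp q hq a b ha hb _ x hx
  show a * p.1 x + b * q.1 x ≤ a * p.2 + b * q.2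
  gcongr
  exacts [hp x hx, hq x hx]

theorem isClosed_consequenceSet : IsClosed (consequenceSet V) := by
  simp only [consequenceSet, Set.ofPred_forall]
  exact isClosed_biInter fun x _ =>
    isClosed_le ((WeakBilin.eval_continuous _ x).comp continuous_fst) continuous_snd

theorem neg_mem_consequenceSet_iff {c : WeakDual ℝ E} {s : ℝ} :
    (-c, -s) ∈ consequenceSet V ↔ ∀ x ∈ feasibleSet V, s ≤ c x :=
  forall₂_congr fun _ _ => neg_le_neg_iff

theorem apply_le_mul_of_mem_consequenceSet (hF : (feasibleSet V).Nonempty)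
    {p : WeakDual ℝ E × ℝ} (hp : p ∈ consequenceSet V) {y : E} {μ : ℝ} (hμ : 0 ≤ μ)
    (hy : ∀ v ∈ V, v.1 y ≤ μ * v.2) : p.1 y ≤ μ * p.2 := by
  rcases hμ.lt_or_eq with hμ | rfl
  · have hyμ : μ⁻¹ • y ∈ feasibleSet V := fun v hv => by
      simpa [inv_mul_le_iff₀ hμ] using hy v hv
    simpa [inv_mul_le_iff₀ hμ] using hp _ hyμ
  · obtain ⟨x, hx⟩ := hF
    have hray : ∀ n : ℝ, 0 ≤ n → p.1 x + n * p.1 y ≤ p.2 := fun n hn => by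
      have hxn : x + n • y ∈ feasibleSet V := fun v hv => by
        simpa using add_le_add (hx v hv)
          (mul_nonpos_of_nonneg_of_nonpos hn (by simpa using hy v hv))
      simpa using hp _ hxn
    rw [zero_mul]
    by_contra! hpos
    have := hray ((|p.2 - p.1 x| + 1) / p.1 y) (by positivity)
    rw [div_mul_cancel₀ _ hpos.ne'] at this
    linarith [le_abs_self (p.2 - p.1 x)]

theorem consequenceSet_subset_farkasCone (hV : V.Nonempty) (hF : (feasibleSet V).Nonempty)
    (hconv : Convex ℝ (farkasCone V)) (hclosed : IsClosed (farkasCone V)) :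
    consequenceSet V ⊆ farkasCone V := by
  intro p hp
  by_contra hpK
  obtain ⟨f, hfK, hfp⟩ := exists_strongDual_nonneg_of_notMem_of_smul_mem
    (zero_mem_farkasCone hV) (fun c hc _ hx => smul_mem_farkasCone hc hx) hconv hclosed hpK
  obtain ⟨y, hf⟩ := f.exists_eq_eval_add_mul
  have hμ : 0 ≤ f (0, 1) := by
    obtain ⟨v, hv⟩ := hV
    exact hfK _ (mem_farkasCone_iff.2 ⟨v, hv, 0, le_rfl, zero_smul _ _, by simp⟩)
  have hVy : ∀ v ∈ V, v.1 (-y) ≤ f (0, 1) * v.2 := fun v hv => by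
    have := hfK v (self_subset_farkasCone hv)
    rw [hf] at this
    simp only [map_neg]
    linarith
  have := apply_le_mul_of_mem_consequenceSet hF hp hμ hVy
  rw [hf] at hfp
  simp only [map_neg] at this
  linarith

theorem feasibleSet_iUnion {ι : Type*} (U : ι → Set (WeakDual ℝ E × ℝ)) :
    feasibleSet (⋃ i, U i) = {x | ∀ i, ∀ v ∈ U i, v.1 x ≤ v.2} := by
  ext x
  simp only [feasibleSet, Set.mem_iUnion, Set.mem_ofPred_eq, forall_exists_index]
  exact forall_comm

theorem bot_lt_infRLIP {U : T → Set (WeakDual ℝ E × ℝ)} {c : WeakDual ℝ E} {s : ℝ}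
    (h : ∀ x ∈ feasibleSet (⋃ t, U t), s ≤ c x) : ⊥ < infRLIP U c := by
  refine (EReal.bot_lt_coe s).trans_le (le_iInf fun x => EReal.coe_le_coe_iff.2 (h x ?_))
  rw [feasibleSet_iUnion]
  exact x.2

end Farkas

theorem stmt19 [Nonempty T] (U : T → Set (WeakDual ℝ X × ℝ)) (hU : ∀ t, (U t).Nonempty)
    (hF : {x : X | ∀ t, ∀ v ∈ U t, v.1 x ≤ v.2}.Nonempty) :
    (∀ (c : WeakDual ℝ X) (s : ℝ), ⊥ < infRLIP U c →
      ((∀ x : X, (∀ v ∈ ⋃ t, U t, v.1 x ≤ v.2) → s ≤ c x) ↔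
        (∃ v ∈ ⋃ t, U t, ∃ l : ℝ, 0 ≤ l ∧ l • v.1 = -c ∧ l * v.2 ≤ -s))) ↔
    (Convex ℝ (coneSet (⋃ t, U t) + {p : WeakDual ℝ X × ℝ | p.1 = 0 ∧ 0 ≤ p.2}) ∧
      IsClosed (coneSet (⋃ t, U t) + {p : WeakDual ℝ X × ℝ | p.1 = 0 ∧ 0 ≤ p.2})) := by
  set V := ⋃ t, U t
  have hV : V.Nonempty := Set.nonempty_iUnion.2 ⟨Classical.arbitrary T, hU _⟩
  rw [← feasibleSet_iUnion] at hF
  constructor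
  · intro hfarkas
    have hKM : farkasCone V = consequenceSet V := by
      refine farkasCone_subset_consequenceSet.antisymm fun p hp => ?_
      have hα : ∀ x ∈ feasibleSet V, -p.2 ≤ (-p.1) x := fun x hx => neg_le_neg (hp x hx)
      have hβ := (hfarkas (-p.1) (-p.2) (bot_lt_infRLIP hα)).1 hα
      simp only [neg_neg] at hβ
      exact mem_farkasCone_iff.2 hβ
    show Convex ℝ (farkasCone V) ∧ IsClosed (farkasCone V)
    exact hKM ▸ ⟨convex_consequenceSet, isClosed_consequenceSet⟩
  · rintro ⟨hconv, hclosed⟩ c s -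
    have hKM : consequenceSet V = farkasCone V :=
      (consequenceSet_subset_farkasCone hV hF hconv hclosed).antisymm
        farkasCone_subset_consequenceSet
    exact neg_mem_consequenceSet_iff.symm.trans (hKM ▸ mem_farkasCone_iff)
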